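/- arXiv:1105.1519 — 4 statements merged into one kernel-verified Lean document; each statement's English description precedes it below -/
import Mathlib

section
/- Let w be a word over a finite totally ordered alphabet, where each letter is declared 'even' or 'odd'. Define an increasing word as one where consecutive letters x,y satisfy x < y, or x = y with x even; define a decreasing word as one where x > y, or x = y with x odd. Then for the word w_{a,b} obtained by keeping only two fixed even letters a < b of w, if the RSK row-insertion algorithm is applied directly to w_{a,b}, the number of letters b remaining in the first row of the resulting tableau equals ρ(w_{a,b}), the maximum over suffixes of (#b − #a). -/
/-- `rho w` : the maximum over all suffixes of `w` (including the empty suffix) of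
#b − #a, where `true` encodes `b` and `false` encodes `a`. -/
def rho (w : List Bool) : ℤ :=
  (w.tails.map (fun s => (s.count true : ℤ) - (s.count false : ℤ))).foldr max 0

/-- The number of letters `b` in the first row of the tableau obtained by applying RSK
row-insertion to a two-letter word over even letters `a < b` : an incoming `b` is appended
to the first row, while an incoming `a` bumps the leftmost `b` out of the first row if one
is present (and is appended otherwise; `a`'s are never bumped since both letters are even
and `a < b`). -/
def firstRowB (w : List Bool) : ℕ :=
  w.foldl (fun k l => if l then k + 1 else k - 1) 0

lemma rho_nil : rho [] = 0 := by simp [rho]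

lemma rho_cons (y : Bool) (w : List Bool) :
    rho (y :: w) =
      max (((y :: w).count true : ℤ) - ((y :: w).count false : ℤ)) (rho w) := by
  simp [rho]

lemma rho_nonneg (w : List Bool) : 0 ≤ rho w := by
  induction w with
  | nil => simp [rho_nil]
  | cons y w ih => rw [rho_cons]; exact le_max_of_le_right ih

lemma rho_concat (w : List Bool) (x : Bool) :
    rho (w ++ [x]) = max (rho w + (if x then 1 else -1)) 0 := by
  induction w with
  | nil =>
    cases x <;> simp [rho, rho_nil]
  | cons y w ih =>
    rw [List.cons_append, rho_cons, rho_cons, ih]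
    have h1 : ((y :: (w ++ [x])).count true : ℤ) - ((y :: (w ++ [x])).count false : ℤ)
        = ((y :: w).count true : ℤ) - ((y :: w).count false : ℤ) + (if x then 1 else -1) := by
      cases x <;> cases y <;> simp [List.count_cons, List.count_append] <;> ring
    rw [h1, ← max_add_add_right, max_assoc]

/-- Applying RSK row-insertion directly to a two-letter word `w` over even letters
`a < b`, the number of letters `b` remaining in the first row equals `rho w`. -/
theorem stmt13 (w : List Bool) : (firstRowB w : ℤ) = rho w := by
  induction w using List.reverseRecOn with
  | nil => simp [firstRowB, rho_nil]
  | append_singleton w x ih =>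
    have h := rho_concat w x
    have hnn := rho_nonneg w
    have hfr : firstRowB (w ++ [x]) =
        if x then firstRowB w + 1 else firstRowB w - 1 := by
      simp [firstRowB, List.foldl_append]
    rw [hfr, h]
    cases x with
    | true =>
      rw [if_pos rfl, if_pos rfl, max_eq_left (by linarith)]
      push_cast; omega
    | false =>
      rw [if_neg (by simp), if_neg (by simp)]
      rcases le_or_gt 1 (rho w) with h1 | h1
      · rw [max_eq_left (by linarith)]; omega
      · rw [max_eq_right (by linarith)]; omega
end

section
/- Consider i.i.d. letters from a finite alphabet {x_1,...,x_K} with probabilities α_1 > α_2 > ... > α_K > 0, Σα_i = 1, and the order x_1 < x_2 < ... < x_K with all letters 'even'. Apply RSK row-insertion to the first n letters and let ξ_k(n) denote the number of letters x_k (k ≥ 2) in the first row of the resulting tableau after n insertions. Then the process ξ_k(n) is stochastically dominated by the random walk Ψ_{α_{k-1},α_k}(n) on {0,1,2,...} (right with probability α_k, left with probability α_{k-1}, started at 0), and hence sup_n E[ξ_k(n)] < ∞. -/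
open MeasureTheory ProbabilityTheory

/-- Schensted row-insertion of a letter `x` into a (weakly increasing) first row, for an
alphabet of even letters: `x` bumps the leftmost entry strictly greater than `x` (which is
discarded, since we only track the first row), or is appended at the end. -/
def rowInsert {K : ℕ} (x : Fin K) : List (Fin K) → List (Fin K)
  | [] => [x]
  | y :: ys => if x < y then x :: ys else y :: rowInsert x ys

/-- The first row of the RSK tableau of a word. -/
def firstRow {K : ℕ} (w : List (Fin K)) : List (Fin K) :=
  w.foldl (fun r x => rowInsert x r) ([] : List (Fin K))

/-!
Insert the letters one at a time and compare the number of `k`s in the first row with the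
reflected walk driven by the same letters: a step right on `k`, a step left on `k1` (held at
`0`), no move otherwise. Inserting `k` adds at most one `k` to the row, and since `k1` is the
letter just below `k`, inserting it bumps a `k` whenever the row contains one; so the count
never overtakes the walk. By independence of the next letter from the past, the law of the walk
obeys the recursion defining `ψ`, and its tails are at most `ρ ^ m` with `ρ = α k / α k1 < 1`,
because `ρ ^ m` solves the tail recursion. Summing the tails bounds `E[ξ n]` by `1 / (1 - ρ)`.
-/

section NatValued

variable {Ω : Type*} [MeasurableSpace Ω] {μ : Measure Ω} [IsFiniteMeasure μ] {f : Ω → ℕ}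

theorem measureReal_le_eq_tsum (hf : Measurable f) (m : ℕ) :
    μ.real {ω | m ≤ f ω} = ∑' j, if m ≤ j then μ.real {ω | f ω = j} else 0 := by
  have h := tsum_measure_preimage_singleton (μ := μ) (Set.to_countable (Set.Ici m))
    (fun j _ => hf (measurableSet_singleton j))
  calc μ.real {ω | m ≤ f ω} = (∑' j : Set.Ici m, μ (f ⁻¹' {(j : ℕ)})).toReal := by
        rw [h]; rfl
    _ = ∑' j : Set.Ici m, μ.real (f ⁻¹' {(j : ℕ)}) :=
        ENNReal.tsum_toReal_eq fun _ => measure_ne_top _ _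
    _ = ∑' j, (Set.Ici m).indicator (fun j => μ.real (f ⁻¹' {j})) j :=
        tsum_subtype (Set.Ici m) fun j => μ.real (f ⁻¹' {j})
    _ = _ := by simp only [Set.indicator_apply, Set.mem_Ici]; rfl

theorem integral_natCast_eq_sum_measureReal (hf : Measurable f) {n : ℕ}
    (hfn : ∀ ω, f ω ≤ n) :
    ∫ ω, (f ω : ℝ) ∂μ = ∑ m ∈ Finset.range n, μ.real {ω | m < f ω} := by
  have hsum : ∀ ω, (f ω : ℝ) = ∑ m ∈ Finset.range n, {ω | m < f ω}.indicator 1 ω := by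
    intro ω
    simp only [Set.indicator_apply, Set.mem_ofPred_eq, Pi.one_apply, Finset.sum_boole]
    have hfilter : {m ∈ Finset.range n | m < f ω} = Finset.range (f ω) := by
      ext m; simp only [Finset.mem_filter, Finset.mem_range]; have := hfn ω; omega
    rw [hfilter, Finset.card_range]
  simp_rw [hsum]
  rw [integral_finsetSum]
  · refine Finset.sum_congr rfl fun m _ => integral_indicator_one ?_
    exact hf measurableSet_Ioi
  · exact fun m _ => (integrable_const 1).indicator (hf measurableSet_Ioi)

end NatValued

section ReflectedWalk

variable {ι : Type*} [DecidableEq ι] (up down : ι)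

/-- Truncated subtraction makes `down` a no-op at `0`: the walk is held at the origin. -/
def walkStep (x : ι) (v : ℕ) : ℕ :=
  if x = up then v + 1 else if x = down then v - 1 else v

def reflectedWalk (ω : ℕ → ι) : ℕ → ℕ
  | 0 => 0
  | n + 1 => walkStep up down (ω n) (reflectedWalk ω n)

theorem walkStep_mono (x : ι) : Monotone (walkStep up down x) := by
  intro v w hvw
  unfold walkStep
  split_ifs <;> omega

theorem reflectedWalk_le (ω : ℕ → ι) (n : ℕ) : reflectedWalk up down ω n ≤ n := by
  induction n with
  | zero => rfl
  | succ n ih =>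
    simp only [reflectedWalk, walkStep]
    split_ifs <;> omega

end ReflectedWalk

section RowInsertion

variable {K : ℕ}

theorem mem_rowInsert {x z : Fin K} {r : List (Fin K)} (h : z ∈ rowInsert x r) :
    z = x ∨ z ∈ r := by
  induction r with
  | nil => simpa [rowInsert] using h
  | cons y ys ih =>
    simp only [rowInsert] at h
    split_ifs at h <;> simp only [List.mem_cons] at h ⊢ <;> grind

theorem pairwise_rowInsert (x : Fin K) {r : List (Fin K)} (hr : r.Pairwise (· ≤ ·)) :
    (rowInsert x r).Pairwise (· ≤ ·) := by
  induction r with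
  | nil => simp [rowInsert]
  | cons y ys ih =>
    rw [List.pairwise_cons] at hr
    simp only [rowInsert]
    split_ifs with hxy
    · exact List.pairwise_cons.2 ⟨fun z hz => hxy.le.trans (hr.1 z hz), hr.2⟩
    · refine List.pairwise_cons.2 ⟨fun z hz => ?_, ih hr.2⟩
      rcases mem_rowInsert hz with rfl | hz
      exacts [not_lt.1 hxy, hr.1 z hz]

theorem count_rowInsert_le_walkStep {k k₁ : Fin K} (hk : k₁ ⋖ k) (x : Fin K)
    {r : List (Fin K)} (hr : r.Pairwise (· ≤ ·)) :
    (rowInsert x r).count k ≤ walkStep k k₁ x (r.count k) := by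
  induction r with
  | nil => simp only [rowInsert, walkStep, List.count_singleton]; split_ifs <;> simp_all
  | cons y ys ih =>
    rw [List.pairwise_cons] at hr
    simp only [rowInsert]
    split_ifs with hxy
    · -- `k₁` bumps `y`, and if `y ≠ k` then the sorted tail lies above `y > k`
      have hys : x = k₁ → y ≠ k → ys.count k = 0 := by
        rintro rfl hyk
        have hky : k < y := lt_of_le_of_ne (hk.ge_of_gt hxy) (Ne.symm hyk)
        exact List.count_eq_zero.2 fun hmem => (hky.trans_le (hr.1 k hmem)).false
      simp only [List.count_cons, walkStep, beq_iff_eq]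
      split_ifs <;> simp_all
    · have hyk : x = k₁ → y ≠ k := by
        rintro rfl rfl
        exact hxy hk.lt
      have := ih hr.2
      simp only [List.count_cons, walkStep, beq_iff_eq] at this ⊢
      split_ifs at this ⊢ <;> simp_all

theorem firstRow_ofFn_succ (ω : ℕ → Fin K) (n : ℕ) :
    firstRow (List.ofFn fun t : Fin (n + 1) => ω t) =
      rowInsert (ω n) (firstRow (List.ofFn fun t : Fin n => ω t)) := by
  rw [firstRow, firstRow, List.ofFn_succ', List.concat_eq_append, List.foldl_append]
  rfl

theorem pairwise_firstRow_ofFn (ω : ℕ → Fin K) (n : ℕ) :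
    (firstRow (List.ofFn fun t : Fin n => ω t)).Pairwise (· ≤ ·) := by
  induction n with
  | zero => simp [firstRow]
  | succ n ih => rw [firstRow_ofFn_succ]; exact pairwise_rowInsert _ ih

theorem count_firstRow_le_reflectedWalk {k k₁ : Fin K} (hk : k₁ ⋖ k) (ω : ℕ → Fin K)
    (n : ℕ) :
    (firstRow (List.ofFn fun t : Fin n => ω t)).count k ≤ reflectedWalk k k₁ ω n := by
  induction n with
  | zero => simp [firstRow, reflectedWalk]
  | succ n ih =>
    rw [firstRow_ofFn_succ]
    exact (count_rowInsert_le_walkStep hk _ (pairwise_firstRow_ofFn ω n)).trans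
      (walkStep_mono k k₁ _ ih)

theorem measurable_count_firstRow_ofFn (k : Fin K) (n : ℕ) :
    Measurable fun ω : ℕ → Fin K => (firstRow (List.ofFn fun t : Fin n => ω t)).count k :=
  (measurable_of_countable fun w : Fin n → Fin K => (firstRow (List.ofFn w)).count k).comp
    (measurable_pi_lambda _ fun t => measurable_pi_apply (t : ℕ))

end RowInsertion

section IIDLetters

variable {ι : Type*} [MeasurableSpace ι]

abbrev prefixMeasurableSpace (n : ℕ) : MeasurableSpace (ℕ → ι) :=
  ⨆ i ∈ Set.Iio n, MeasurableSpace.comap (fun ω => ω i) ‹_›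

theorem prefixMeasurableSpace_le (n : ℕ) :
    prefixMeasurableSpace (ι := ι) n ≤ MeasurableSpace.pi :=
  iSup₂_le fun i _ => (measurable_pi_apply i).comap_le

variable [MeasurableSingletonClass ι]

theorem measurableSet_apply_eq (t : ℕ) (x : ι) : MeasurableSet {ω : ℕ → ι | ω t = x} :=
  measurable_pi_apply (X := fun _ : ℕ => ι) t (measurableSet_singleton x)

variable {μ : Measure (ℕ → ι)} [IsProbabilityMeasure μ]

theorem measureReal_apply_eq_add_le_one (t : ℕ) {x y : ι} (hxy : x ≠ y) :
    μ.real {ω | ω t = x} + μ.real {ω | ω t = y} ≤ 1 := by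
  rw [← measureReal_union]
  · exact measureReal_le_one
  · exact Set.disjoint_left.2 fun ω hx hy => hxy (hx.symm.trans hy)
  · exact measurableSet_apply_eq t y

variable [Fintype ι]

theorem sum_measureReal_apply_eq (t : ℕ) : ∑ x, μ.real {ω | ω t = x} = 1 := by
  have h := sum_measureReal_preimage_singleton (μ := μ) Finset.univ
    fun x _ => measurableSet_apply_eq t x
  rwa [Finset.coe_univ, Set.preimage_univ, probReal_univ] at h

variable [DecidableEq ι] (up down : ι) {p : ι → ℝ}

theorem measurable_reflectedWalk_prefix (n : ℕ) :
    Measurable[prefixMeasurableSpace n] fun ω => reflectedWalk up down ω n := by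
  induction n with
  | zero => exact measurable_const
  | succ n ih =>
    have hstep : Measurable fun q : ι × ℕ => walkStep up down q.1 q.2 :=
      measurable_of_countable _
    have hmono : prefixMeasurableSpace (ι := ι) n ≤ prefixMeasurableSpace (n + 1) :=
      biSup_mono fun i hi => Set.mem_Iio.2 (Nat.lt_succ_of_lt hi)
    have hlast : Measurable[prefixMeasurableSpace (n + 1)] fun ω : ℕ → ι => ω n :=
      Measurable.of_comap_le (le_iSup₂_of_le n (Set.mem_Iio.2 n.lt_succ_self) le_rfl)
    exact hstep.comp (hlast.prodMk (ih.mono hmono le_rfl))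

theorem measurable_reflectedWalk (n : ℕ) : Measurable fun ω => reflectedWalk up down ω n :=
  (measurable_reflectedWalk_prefix up down n).mono (prefixMeasurableSpace_le n) le_rfl

theorem measureReal_reflectedWalk_succ_eq_sum
    (hindep : iIndepFun (fun t (ω : ℕ → ι) => ω t) μ) (n : ℕ) (s : Set ℕ) :
    μ.real {ω | reflectedWalk up down ω (n + 1) ∈ s} =
      ∑ x, μ.real {ω | ω n = x} *
        μ.real {ω | walkStep up down x (reflectedWalk up down ω n) ∈ s} := by
  have hind : Indep (MeasurableSpace.comap (fun ω : ℕ → ι => ω n) ‹_›)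
      (prefixMeasurableSpace n) μ := by
    have := indep_iSup_of_disjoint (fun i => (measurable_pi_apply i).comap_le)
      ((iIndepFun_iff_iIndep _ _ _).1 hindep)
      (S := {n}) (T := Set.Iio n) (Set.disjoint_singleton_left.2 (lt_irrefl n))
    rwa [iSup_singleton] at this
  have hunion : {ω | reflectedWalk up down ω (n + 1) ∈ s} =
      ⋃ x, {ω | ω n = x} ∩ {ω | walkStep up down x (reflectedWalk up down ω n) ∈ s} := by
    ext ω; simp [reflectedWalk]
  rw [hunion, measureReal_iUnion_fintype]
  · refine Finset.sum_congr rfl fun x _ => ?_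
    have hx : MeasurableSet[MeasurableSpace.comap (fun ω : ℕ → ι => ω n) ‹_›]
        {ω | ω n = x} :=
      ⟨{x}, measurableSet_singleton x, rfl⟩
    have hw : MeasurableSet[prefixMeasurableSpace n]
        {ω | walkStep up down x (reflectedWalk up down ω n) ∈ s} :=
      measurable_reflectedWalk_prefix up down n
        (MeasurableSet.of_discrete (s := walkStep up down x ⁻¹' s))
    simp only [measureReal_def, (Indep_iff _ _ μ).1 hind _ _ hx hw, ENNReal.toReal_mul]
  · intro x y hxy
    exact Set.disjoint_left.2 fun ω hx hy => hxy (hx.1.symm.trans hy.1)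
  · intro x
    exact (measurableSet_apply_eq n x).inter <| measurable_reflectedWalk up down n
      (MeasurableSet.of_discrete (s := walkStep up down x ⁻¹' s))

theorem measureReal_reflectedWalk_succ
    (hindep : iIndepFun (fun t (ω : ℕ → ι) => ω t) μ)
    (hp : ∀ t x, μ.real {ω | ω t = x} = p x) (hud : up ≠ down) (n : ℕ) (s : Set ℕ) :
    μ.real {ω | reflectedWalk up down ω (n + 1) ∈ s} =
      p up * μ.real {ω | reflectedWalk up down ω n + 1 ∈ s} +
      p down * μ.real {ω | reflectedWalk up down ω n - 1 ∈ s} +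
      (1 - p up - p down) * μ.real {ω | reflectedWalk up down ω n ∈ s} := by
  set q := μ.real {ω | reflectedWalk up down ω n ∈ s}
  have hother :
      ∑ x, p x * (μ.real {ω | walkStep up down x (reflectedWalk up down ω n) ∈ s} - q) =
      p up * (μ.real {ω | reflectedWalk up down ω n + 1 ∈ s} - q) +
      p down * (μ.real {ω | reflectedWalk up down ω n - 1 ∈ s} - q) := by
    rw [Fintype.sum_eq_add up down hud fun x hx => by simp [walkStep, hx.1, hx.2, q]]
    simp [walkStep, hud.symm]
  rw [measureReal_reflectedWalk_succ_eq_sum up down hindep]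
  simp_rw [hp n]
  have hsum : ∑ x, p x = 1 := by simpa only [hp n] using sum_measureReal_apply_eq (μ := μ) n
  simp only [mul_sub, Finset.sum_sub_distrib, ← Finset.sum_mul, hsum] at hother
  linear_combination hother

theorem eq_measureReal_reflectedWalk_eq_of_rec
    (hindep : iIndepFun (fun t (ω : ℕ → ι) => ω t) μ)
    (hp : ∀ t x, μ.real {ω | ω t = x} = p x) (hud : up ≠ down) {ψ : ℕ → ℕ → ℝ}
    (hψ0 : ψ 0 0 = 1) (hψ0' : ∀ j, ψ 0 (j + 1) = 0)
    (hψrec0 : ∀ n, ψ (n + 1) 0 = ((1 - p up - p down) + p down) * ψ n 0 + p down * ψ n 1)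
    (hψrec : ∀ n j, ψ (n + 1) (j + 1) =
      p up * ψ n j + (1 - p up - p down) * ψ n (j + 1) + p down * ψ n (j + 2))
    (n j : ℕ) : ψ n j = μ.real {ω | reflectedWalk up down ω n = j} := by
  induction n generalizing j with
  | zero => cases j <;> simp [reflectedWalk, hψ0, hψ0']
  | succ n ih =>
    have hrec := measureReal_reflectedWalk_succ up down hindep hp hud n {j}
    simp only [Set.mem_singleton_iff] at hrec
    rw [hrec]
    cases j with
    | zero =>
      have hpred : {ω | reflectedWalk up down ω n - 1 = 0} =
          {ω | reflectedWalk up down ω n = 0} ∪ {ω | reflectedWalk up down ω n = 1} := by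
        ext ω; simp only [Set.mem_ofPred_eq, Set.mem_union]; omega
      have hsucc : {ω | reflectedWalk up down ω n + 1 = 0} = ∅ := by ext; simp
      rw [hsucc, hpred, measureReal_empty, measureReal_union, hψrec0, ih, ih]
      · ring
      · exact Set.disjoint_left.2 fun ω h0 h1 => by simp_all
      · exact measurable_reflectedWalk up down n (measurableSet_singleton 1)
    | succ j =>
      have hpred : {ω | reflectedWalk up down ω n - 1 = j + 1} =
          {ω | reflectedWalk up down ω n = j + 2} := by
        ext ω; simp only [Set.mem_ofPred_eq]; omega
      simp only [Nat.add_right_cancel_iff]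
      rw [hpred, hψrec, ih, ih, ih]
      ring

theorem measureReal_le_reflectedWalk_le_pow
    (hindep : iIndepFun (fun t (ω : ℕ → ι) => ω t) μ)
    (hp : ∀ t x, μ.real {ω | ω t = x} = p x) (hud : up ≠ down) (hdown : 0 < p down)
    (n m : ℕ) : μ.real {ω | m ≤ reflectedWalk up down ω n} ≤ (p up / p down) ^ m := by
  set ρ := p up / p down
  have hρ : p down * ρ = p up := mul_div_cancel₀ _ hdown.ne'
  have hup : 0 ≤ p up := hp 0 up ▸ measureReal_nonneg
  have hstay : 0 ≤ 1 - p up - p down := by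
    have := measureReal_apply_eq_add_le_one (μ := μ) 0 hud
    rw [hp, hp] at this
    linarith
  induction n generalizing m with
  | zero =>
    cases m with
    | zero => simp [reflectedWalk]
    | succ m => simpa [reflectedWalk] using pow_nonneg (div_nonneg hup hdown.le) (m + 1)
  | succ n ih =>
    cases m with
    | zero => simp
    | succ m =>
      have hpred : {ω | m + 1 ≤ reflectedWalk up down ω n - 1} =
          {ω | m + 2 ≤ reflectedWalk up down ω n} := by
        ext ω; simp only [Set.mem_ofPred_eq]; omega
      have hrec := measureReal_reflectedWalk_succ up down hindep hp hud n {v | m + 1 ≤ v}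
      simp only [Set.mem_ofPred_eq, Nat.add_le_add_iff_right, hpred] at hrec
      rw [hrec]
      calc _ ≤ p up * ρ ^ m + p down * ρ ^ (m + 2) + (1 - p up - p down) * ρ ^ (m + 1) := by
            gcongr <;> exact ih _
        _ = ρ ^ (m + 1) := by linear_combination (ρ ^ (m + 1) - ρ ^ m) * hρ

end IIDLetters

theorem stmt14_general (K : ℕ) (α : Fin K → ℝ) (hpos : ∀ i, 0 < α i)
    (hanti : ∀ i j : Fin K, i < j → α j < α i)
    (k k1 : Fin K) (hk : (k1 : ℕ) + 1 = (k : ℕ))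
    (μ : Measure (ℕ → Fin K)) [IsProbabilityMeasure μ]
    (hindep : iIndepFun (fun t (ω : ℕ → Fin K) => ω t) μ)
    (hdist : ∀ t i, μ {ω | ω t = i} = ENNReal.ofReal (α i))
    (ξ : ℕ → (ℕ → Fin K) → ℕ)
    (hξ : ∀ n ω, ξ n ω = (firstRow (List.ofFn (fun t : Fin n => ω t))).count k)
    (ψ : ℕ → ℕ → ℝ)
    (hψ0 : ψ 0 0 = 1) (hψ0' : ∀ j, ψ 0 (j + 1) = 0)
    (hψrec0 : ∀ n, ψ (n + 1) 0 = ((1 - α k - α k1) + α k1) * ψ n 0 + α k1 * ψ n 1)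
    (hψrec : ∀ n j, ψ (n + 1) (j + 1) =
      α k * ψ n j + (1 - α k - α k1) * ψ n (j + 1) + α k1 * ψ n (j + 2)) :
    (∀ n m : ℕ, (μ {ω | m ≤ ξ n ω}).toReal ≤ ∑' j : ℕ, if m ≤ j then ψ n j else 0) ∧
    ∃ C : ℝ, ∀ n, ∫ ω, (ξ n ω : ℝ) ∂μ ≤ C := by
  have hcov : k1 ⋖ k :=
    ⟨Fin.lt_def.2 (by omega), fun c h1 h2 => by rw [Fin.lt_def] at h1 h2; omega⟩
  have hα : ∀ t i, μ.real {ω | ω t = i} = α i := fun t i => by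
    rw [measureReal_def, hdist, ENNReal.toReal_ofReal (hpos i).le]
  have hξ_le : ∀ n ω, ξ n ω ≤ reflectedWalk k k1 ω n := fun n ω =>
    (hξ n ω).trans_le (count_firstRow_le_reflectedWalk hcov ω n)
  have htail : ∀ n m,
      μ.real {ω | m ≤ ξ n ω} ≤ μ.real {ω | m ≤ reflectedWalk k k1 ω n} :=
    fun n m => measureReal_mono fun ω hω => le_trans hω (hξ_le n ω)
  set ρ := α k / α k1
  have hρ0 : 0 < ρ := div_pos (hpos k) (hpos k1)
  have hρ1 : ρ < 1 := (div_lt_one (hpos k1)).2 (hanti k1 k hcov.lt)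
  refine ⟨fun n m => ?_, ⟨(1 - ρ)⁻¹, fun n => ?_⟩⟩
  · simp_rw [eq_measureReal_reflectedWalk_eq_of_rec k k1 hindep hα hcov.ne' hψ0 hψ0' hψrec0
      hψrec n, ← measureReal_le_eq_tsum (measurable_reflectedWalk k k1 n)]
    exact htail n m
  · have hξm : Measurable (ξ n) := funext (hξ n) ▸ measurable_count_firstRow_ofFn k n
    rw [integral_natCast_eq_sum_measureReal hξm
      fun ω => (hξ_le n ω).trans (reflectedWalk_le k k1 ω n)]
    calc ∑ m ∈ Finset.range n, μ.real {ω | m < ξ n ω}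
        ≤ ∑ m ∈ Finset.range n, ρ ^ m := Finset.sum_le_sum fun m _ =>
          ((htail n (m + 1)).trans (measureReal_le_reflectedWalk_le_pow k k1 hindep hα hcov.ne'
            (hpos k1) n (m + 1))).trans (pow_le_pow_of_le_one hρ0.le hρ1.le m.le_succ)
      _ ≤ (1 - ρ)⁻¹ := by
        have := geom_sum_Ico_le_of_lt_one (m := 0) (n := n) hρ0.le hρ1
        rwa [← Finset.range_eq_Ico, pow_zero, one_div] at this

/-- For i.i.d. letters `x_0 < x_1 < ... < x_{K-1}` (all even) with strictly decreasing
probabilities `α`, the number `ξ k n` of letters `x k` in the first RSK row after `n`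
insertions is stochastically dominated by the reflected walk `Ψ` with right-probability
`α k` and left-probability `α k1` (where `k1 + 1 = k`), whose distribution after `n` steps
is `ψ n`; hence `sup_n E[ξ k n] < ∞`. -/
theorem stmt14 (K : ℕ) (α : Fin K → ℝ) (hpos : ∀ i, 0 < α i)
    (hanti : ∀ i j : Fin K, i < j → α j < α i) (hsum : ∑ i, α i = 1)
    (k k1 : Fin K) (hk : (k1 : ℕ) + 1 = (k : ℕ))
    (μ : Measure (ℕ → Fin K)) [IsProbabilityMeasure μ]
    (hindep : iIndepFun (fun t (ω : ℕ → Fin K) => ω t) μ)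
    (hdist : ∀ t i, μ {ω | ω t = i} = ENNReal.ofReal (α i))
    (ξ : ℕ → (ℕ → Fin K) → ℕ)
    (hξ : ∀ n ω, ξ n ω = (firstRow (List.ofFn (fun t : Fin n => ω t))).count k)
    (ψ : ℕ → ℕ → ℝ)
    (hψ0 : ψ 0 0 = 1) (hψ0' : ∀ j, ψ 0 (j + 1) = 0)
    (hψrec0 : ∀ n, ψ (n + 1) 0 = ((1 - α k - α k1) + α k1) * ψ n 0 + α k1 * ψ n 1)
    (hψrec : ∀ n j, ψ (n + 1) (j + 1) =
      α k * ψ n j + (1 - α k - α k1) * ψ n (j + 1) + α k1 * ψ n (j + 2)) :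
    (∀ n m : ℕ, (μ {ω | m ≤ ξ n ω}).toReal ≤ ∑' j : ℕ, if m ≤ j then ψ n j else 0) ∧
    ∃ C : ℝ, ∀ n, ∫ ω, (ξ n ω : ℝ) ∂μ ≤ C :=
  stmt14_general K α hpos hanti k k1 hk μ hindep hdist ξ hξ ψ hψ0 hψ0' hψrec0 hψrec
end

section
/- Let α_1 ≥ α_2 ≥ ... ≥ 0 with Σ_{i≥1} α_i ≤ 1 and α_K > 0 for some K, and suppose Σ_{i>l} α_i > 0 for all l (infinitely many positive α's). Then either (a) there exists l ∈ ℕ with Σ_{i=l+1}^∞ α_i < α_K and Σ_{i=l+1}^∞ α_i ≠ α_r for every r, or (b) there exist l_1, m_1 ∈ ℕ and r ≤ l_1 such that Σ_{i=l_1+1}^∞ α_i = α_r < α_K, α_r > Σ_{i=l_1+1}^{l_1+m_1} α_i > α_{r+1}, and Σ_{i=l_1+m_1+1}^∞ α_i < α_{l_1}. -/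
/-- Existence of an amalgamation point for an infinite strictly decreasing (on its positive
part) sequence of parameters: either (a) some tail sum `Σ_{i>l} α i` is smaller than `α K`
and differs from every `α r`, or (b) there are `l1, m1, r` with `r ≤ l1`,
`Σ_{i>l1} α i = α r < α K`, `α r > Σ_{i=l1+1}^{l1+m1} α i > α (r+1)` and
`Σ_{i>l1+m1} α i < α l1`. (Indices here start from `0`.) -/
theorem stmt15 (α : ℕ → ℝ) (hnonneg : ∀ i, 0 ≤ α i) (hmono : ∀ i, α (i + 1) ≤ α i)
    (hstrict : ∀ i, α i ≠ 0 → α (i + 1) < α i)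
    (hsummable : Summable α) (hsum : ∑' i, α i ≤ 1)
    (K : ℕ) (hK : 0 < α K)
    (hinf : ∀ l : ℕ, 0 < ∑' i : ℕ, α (l + 1 + i)) :
    (∃ l : ℕ, (∑' i : ℕ, α (l + 1 + i)) < α K ∧ ∀ r : ℕ, (∑' i : ℕ, α (l + 1 + i)) ≠ α r) ∨
    (∃ l1 m1 r : ℕ, 0 < m1 ∧ r ≤ l1 ∧
      (∑' i : ℕ, α (l1 + 1 + i)) = α r ∧ α r < α K ∧
      (∑ i ∈ Finset.range m1, α (l1 + 1 + i)) < α r ∧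
      α (r + 1) < ∑ i ∈ Finset.range m1, α (l1 + 1 + i) ∧
      (∑' i : ℕ, α (l1 + m1 + 1 + i)) < α l1) := by
  -- summability of shifted sequences
  have hsumm : ∀ k : ℕ, Summable (fun i : ℕ => α (k + i)) :=
    fun k => hsummable.comp_injective (add_right_injective k)
  -- every term is positive
  have hpos1 : ∀ l : ℕ, 0 < α (l + 1) := by
    intro l
    by_contra h
    push_neg at h
    have h0 : α (l + 1) = 0 := le_antisymm h (hnonneg _)
    have hz : ∀ i, α (l + 1 + i) = 0 := by
      intro i
      induction i with
      | zero => simpa using h0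
      | succ n ih =>
        have h1 : α (l + 1 + (n + 1)) ≤ α (l + 1 + n) := by
          have := hmono (l + 1 + n); simpa [Nat.add_assoc] using this
        exact le_antisymm (by rw [← ih]; exact h1) (hnonneg _)
    have := hinf l
    simp [hz] at this
  have hpos : ∀ i, 0 < α i := by
    intro i
    cases i with
    | zero => exact lt_of_lt_of_le (hpos1 0) (hmono 0)
    | succ n => exact hpos1 n
  have hsd : ∀ i, α (i + 1) < α i := fun i => hstrict i (hpos i).ne'
  have hanti : StrictAnti α := strictAnti_nat_of_succ_lt hsd
  -- tail sums exceed the next term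
  have hT_gt : ∀ l : ℕ, α (l + 1) < ∑' i : ℕ, α (l + 1 + i) := by
    intro l
    have h1 : (∑' i : ℕ, α (l + 1 + i)) = α (l + 1 + 0) + ∑' i : ℕ, α (l + 1 + (i + 1)) :=
      Summable.tsum_eq_zero_add (hsumm (l + 1))
    have h2 : (∑' i : ℕ, α (l + 1 + (i + 1))) = ∑' i : ℕ, α (l + 1 + 1 + i) :=
      tsum_congr fun i => by ring_nf
    have h3 : 0 < ∑' i : ℕ, α (l + 1 + 1 + i) := hinf (l + 1)
    rw [h1, h2]
    simpa using h3
  -- tail sums tend to 0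
  have hT0 : Filter.Tendsto (fun l : ℕ => ∑' i : ℕ, α (l + 1 + i)) Filter.atTop (nhds 0) := by
    have h := tendsto_sum_nat_add α
    have h2 : (fun l : ℕ => ∑' i : ℕ, α (l + 1 + i))
        = (fun l : ℕ => ∑' i : ℕ, α (i + l)) ∘ (fun l => l + 1) := by
      funext l
      exact tsum_congr fun i => by rw [Nat.add_comm]
    rw [h2]
    exact h.comp (Filter.tendsto_add_atTop_nat 1)
  -- pick l0 with tail below α K
  obtain ⟨l0, hl0⟩ := (hT0.eventually (gt_mem_nhds hK)).exists
  rcases Classical.em (∃ r, (∑' i : ℕ, α (l0 + 1 + i)) = α r) with ⟨r, hr⟩ | hnone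
  · right
    have hrK : α r < α K := hr ▸ hl0
    have hrle : r ≤ l0 := by
      by_contra h
      push_neg at h
      have h1 : α r ≤ α (l0 + 1) := hanti.antitone h
      have h2 := hT_gt l0
      rw [hr] at h2
      linarith
    -- partial sums
    have hS_lt : ∀ m : ℕ, (∑ i ∈ Finset.range m, α (l0 + 1 + i)) < α r := by
      intro m
      have h1 := Summable.sum_add_tsum_nat_add (f := fun i : ℕ => α (l0 + 1 + i)) m (hsumm (l0 + 1))
      have h2 : (∑' i : ℕ, α (l0 + 1 + (i + m))) = ∑' i : ℕ, α (l0 + m + 1 + i) :=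
        tsum_congr fun i => by ring_nf
      have h3 : 0 < ∑' i : ℕ, α (l0 + m + 1 + i) := hinf (l0 + m)
      rw [h2] at h1
      rw [hr] at h1
      linarith
    have hS_tend : Filter.Tendsto (fun m : ℕ => ∑ i ∈ Finset.range m, α (l0 + 1 + i))
        Filter.atTop (nhds (α r)) := by
      have h := (hsumm (l0 + 1)).hasSum.tendsto_sum_nat
      rwa [show (∑' i : ℕ, α (l0 + 1 + i)) = α r from hr] at h
    have hev1 : ∀ᶠ m : ℕ in Filter.atTop,
        α (r + 1) < ∑ i ∈ Finset.range m, α (l0 + 1 + i) :=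
      hS_tend.eventually (lt_mem_nhds (hsd r))
    have hmap : Filter.Tendsto (fun m : ℕ => l0 + m) Filter.atTop Filter.atTop := by
      simpa [Nat.add_comm] using Filter.tendsto_add_atTop_nat l0
    have hcomp : Filter.Tendsto (fun m : ℕ => ∑' i : ℕ, α (l0 + m + 1 + i))
        Filter.atTop (nhds 0) := hT0.comp hmap
    have hev2 : ∀ᶠ m : ℕ in Filter.atTop, (∑' i : ℕ, α (l0 + m + 1 + i)) < α l0 :=
      hcomp.eventually (gt_mem_nhds (hpos l0))
    have hev3 : ∀ᶠ m : ℕ in Filter.atTop, 1 ≤ m := Filter.eventually_ge_atTop 1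
    obtain ⟨m1, ⟨ha, hb⟩, hc⟩ := ((hev1.and hev2).and hev3).exists
    exact ⟨l0, m1, r, hc, hrle, hr, hrK, hS_lt m1, ha, hb⟩
  · left
    exact ⟨l0, hl0, fun r h => hnone ⟨r, h⟩⟩
end

section
/- Let q1 < q3 with q1, q3 > 0, q1 + q2 + q3 = 1, and let Ψ(n) be the reflected birth-death chain on {0,1,2,...} started at 0 with right-probability q1 and left-probability q3. Then for all n and all k ≥ 0, P(Ψ(n) = k) ≤ 2 (q1/q3)^k. -/
/-!
The vector `k ↦ 2 (q1/q3)^k` is invariant under one step of the chain, and the one-step map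
is monotone since its coefficients are nonnegative. The distribution at time `0` lies below
this invariant vector, hence so does every iterate.
-/

/-- The distribution after one step of the reflected chain, given the distribution `f` before it. -/
def reflectedStep (q1 q2 q3 : ℝ) (f : ℕ → ℝ) : ℕ → ℝ
  | 0 => (q2 + q3) * f 0 + q3 * f 1
  | k + 1 => q1 * f k + q2 * f (k + 1) + q3 * f (k + 2)

theorem reflectedStep_monotone {q1 q2 q3 : ℝ} (h1 : 0 ≤ q1) (h2 : 0 ≤ q2) (h3 : 0 ≤ q3) :
    Monotone (reflectedStep q1 q2 q3) := by
  intro f g hfg k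
  cases k <;> simp only [reflectedStep] <;> gcongr <;> apply hfg

theorem reflectedStep_geometric {q1 q2 q3 : ℝ} (h3 : q3 ≠ 0) (hsum : q1 + q2 + q3 = 1)
    (c : ℝ) : reflectedStep q1 q2 q3 (fun k => c * (q1 / q3) ^ k) = fun k => c * (q1 / q3) ^ k := by
  have hq3r : q3 * (q1 / q3) = q1 := mul_div_cancel₀ q1 h3
  funext k
  cases k with
  | zero =>
    simp only [reflectedStep]
    linear_combination c * hq3r + c * hsum
  | succ k =>
    simp only [reflectedStep]
    linear_combination (c * (q1 / q3) ^ (k + 1) - c * (q1 / q3) ^ k) * hq3r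
      + c * (q1 / q3) ^ (k + 1) * hsum

theorem le_of_monotone_of_fixedPt {α : Type*} [Preorder α] {T : α → α} (hT : Monotone T)
    {a : α} (ha : T a = a) {x : ℕ → α} (hx : ∀ n, x (n + 1) = T (x n)) (h0 : x 0 ≤ a)
    (n : ℕ) : x n ≤ a := by
  induction n with
  | zero => exact h0
  | succ n ih => rw [hx, ← ha]; exact hT ih

theorem stmt19_general (q1 q2 q3 : ℝ) (h1 : 0 < q1) (h3 : 0 < q3)
    (h2 : 0 ≤ q2) (hsum : q1 + q2 + q3 = 1)
    (p : ℕ → ℕ → ℝ)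
    (hp0 : p 0 0 = 1) (hp0' : ∀ k, p 0 (k + 1) = 0)
    (hrec0 : ∀ n, p (n + 1) 0 = (q2 + q3) * p n 0 + q3 * p n 1)
    (hrec : ∀ n k, p (n + 1) (k + 1) = q1 * p n k + q2 * p n (k + 1) + q3 * p n (k + 2)) :
    ∀ n k, p n k ≤ 2 * (q1 / q3) ^ k := by
  have hstep : ∀ n, p (n + 1) = reflectedStep q1 q2 q3 (p n) := by
    intro n
    funext k
    cases k with
    | zero => exact hrec0 n
    | succ k => exact hrec n k
  have hinit : p 0 ≤ fun k => 2 * (q1 / q3) ^ k := by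
    intro k
    cases k with
    | zero => simp [hp0]
    | succ k => rw [hp0']; positivity
  intro n
  exact le_of_monotone_of_fixedPt (reflectedStep_monotone h1.le h2 h3.le)
    (reflectedStep_geometric h3.ne' hsum 2) hstep hinit n

/-- Pointwise bound for the distribution of the reflected walk: if `p n k` is the
probability that the reflected birth-death chain (right-probability `q1`, left-probability
`q3 > q1`, started at `0`) is at `k` after `n` steps, then `p n k ≤ 2 (q1/q3)^k`. -/
theorem stmt19 (q1 q2 q3 : ℝ) (h1 : 0 < q1) (h3 : 0 < q3) (h13 : q1 < q3)
    (h2 : 0 ≤ q2) (hsum : q1 + q2 + q3 = 1)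
    (p : ℕ → ℕ → ℝ)
    (hp0 : p 0 0 = 1) (hp0' : ∀ k, p 0 (k + 1) = 0)
    (hrec0 : ∀ n, p (n + 1) 0 = (q2 + q3) * p n 0 + q3 * p n 1)
    (hrec : ∀ n k, p (n + 1) (k + 1) = q1 * p n k + q2 * p n (k + 1) + q3 * p n (k + 2)) :
    ∀ n k, p n k ≤ 2 * (q1 / q3) ^ k :=
  stmt19_general q1 q2 q3 h1 h3 h2 hsum p hp0 hp0' hrec0 hrec
end
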